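/- arXiv:0903.0834 — 2 statements merged into one kernel-verified Lean document; each statement's English description precedes it below -/
import Mathlib

section
/- Let A be a Banach ternary algebra and X a ternary Banach A-module, and let 𝕋¹ = {λ ∈ ℂ : |λ| = 1}. Suppose f : A → X is a mapping with f(0) = 0, g, h, k : A → A are mappings with g(0) = h(0) = k(0) = 0, and φ : A×A×A×A×A → [0,∞) is a function such that φ̃(x,y,u,v,w) := (1/2) Σ_{n=0}^∞ φ(2ⁿx, 2ⁿy, 2ⁿu, 2ⁿv, 2ⁿw) < ∞ for all x,y,u,v,w ∈ A, and such that for all λ ∈ 𝕋¹ and all x,y,u,v,w ∈ A: ‖f(λx + λy + [uvw]_A) − λf(x) − λf(y) − [[f(u)vw]_X]_{(g,h,k)} + [[f(v)uw]_X]_{(g,h,k)} + [[f(w)vu]_X]_{(g,h,k)}‖ ≤ φ(x,y,u,v,w), ‖g(λx+λy) − λg(x) − λg(y)‖ ≤ φ(x,y,0,0,0), ‖h(λx+λy) − λh(x) − λh(y)‖ ≤ φ(x,y,0,0,0), and ‖k(λx+λy) − λk(x) − λk(y)‖ ≤ φ(x,y,0,0,0). Then there exist unique ℂ-linear mappings σ,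 τ, ξ : A → A with ‖g(x) − σ(x)‖ ≤ φ̃(x,x,0,0,0), ‖h(x) − τ(x)‖ ≤ φ̃(x,x,0,0,0), ‖k(x) − ξ(x)‖ ≤ φ̃(x,x,0,0,0) for all x ∈ A, and there exists a unique ℂ-linear mapping D : A → X with ‖f(x) − D(x)‖ ≤ φ̃(x,x,0,0,0) for all x ∈ A which satisfies the Lie ternary (σ,τ,ξ)-derivation identity D([uvw]_A) = [[D(u)vw]_X]_{(σ,τ,ξ)} − [[D(v)uw]_X]_{(σ,τ,ξ)} − [[D(w)vu]_X]_{(σ,τ,ξ)} for all u,v,w ∈ A. Moreover D(x) = lim_{n→∞} f(2ⁿx)/2ⁿ, σ(x) = lim_{n→∞} g(2ⁿx)/2ⁿ, τ(x) = lim_{n→∞} h(2ⁿx)/2ⁿ, ξ(x) = lim_{n→∞} k(2ⁿx)/2ⁿ. -/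
open Filter Topology

/-!
Each of `g, h, k, f` is approximately additive along the unit circle, so the direct method of
Hyers and Ulam applies: the dyadic rescalings `2⁻ⁿ F (2ⁿ x)` are Cauchy, consecutive terms being
`φ (2ⁿ x) (2ⁿ x) 0 0 0 / 2` apart, and their limit is exactly additive under unimodular scalars.
That already forces `ℂ`-linearity, because every complex number is a natural multiple of a sum of
two unimodular ones; a tail estimate makes the limit the only linear map within `φ̃` of `F`.
For the derivation identity, trilinearity of the ternary products turns the defect of `f` at
`(2ⁿ u, 2ⁿ v, 2ⁿ w)` into `2³ⁿ` times the defect of the rescaled maps at `(u, v, w)`, so the latter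
is at most `φ 0 0 (2ⁿ u) (2ⁿ v) (2ⁿ w) → 0`; since bounded trilinear maps are jointly continuous,
it also tends to the defect of `(D, σ, τ, ξ)`, which therefore vanishes.
-/

/-- The `(g,h,k)`-twisted bracket `[[x b c]_X]_{(g,h,k)} = [x h(b) k(c)]_X - [g(c) h(b) x]_X`,
where `mXAA` is the module product `X × A × A → X` and `mAAX` is the product `A × A × X → X`. -/
def twistedBracket {A X : Type*} [SubtractionMonoid X]
    (mXAA : X → A → A → X) (mAAX : A → A → X → X)
    (g h k : A → A) (x : X) (b c : A) : X :=
  mXAA x (h b) (k c) - mAAX (g c) (h b) x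

section DyadicRescale

variable {E G : Type*} [NormedAddCommGroup E] [NormedSpace ℝ E]
  [NormedAddCommGroup G] [NormedSpace ℝ G]

noncomputable def dyadicRescale (F : E → G) (n : ℕ) (x : E) : G :=
  ((2 : ℝ) ^ n)⁻¹ • F ((2 : ℝ) ^ n • x)

theorem norm_inv_two_pow_smul_le (n : ℕ) (z : G) : ‖((2 : ℝ) ^ n)⁻¹ • z‖ ≤ ‖z‖ := by
  rw [norm_smul]
  refine mul_le_of_le_one_left (norm_nonneg z) ?_
  rw [norm_inv, norm_pow, Real.norm_two]
  exact inv_le_one_of_one_le₀ (one_le_pow₀ one_le_two)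

variable {F : E → G} {ψ : E → ℝ}

theorem dist_dyadicRescale_succ_le (hF : ∀ y, ‖F (y + y) - F y - F y‖ ≤ ψ y) (x : E) (n : ℕ) :
    dist (dyadicRescale F n x) (dyadicRescale F (n + 1) x) ≤ 1 / 2 * ψ ((2 : ℝ) ^ n • x) := by
  set y := (2 : ℝ) ^ n • x
  have hsucc : (2 : ℝ) ^ (n + 1) • x = y + y := by rw [pow_succ, mul_comm, mul_smul, two_smul]
  have hdiff : dyadicRescale F n x - dyadicRescale F (n + 1) x
      = ((2 : ℝ) ^ n)⁻¹ • (2⁻¹ : ℝ) • -(F (y + y) - F y - F y) := by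
    rw [dyadicRescale, dyadicRescale, hsucc, pow_succ, mul_inv, mul_smul]
    module
  rw [dist_eq_norm, hdiff]
  calc _ ≤ ‖(2⁻¹ : ℝ) • -(F (y + y) - F y - F y)‖ := norm_inv_two_pow_smul_le n _
    _ = 1 / 2 * ‖F (y + y) - F y - F y‖ := by rw [norm_smul, norm_neg]; norm_num
    _ ≤ 1 / 2 * ψ y := by gcongr; exact hF y

theorem cauchySeq_dyadicRescale (hF : ∀ y, ‖F (y + y) - F y - F y‖ ≤ ψ y) {x : E}
    (hψ : Summable fun n : ℕ => ψ ((2 : ℝ) ^ n • x)) :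
    CauchySeq fun n => dyadicRescale F n x :=
  cauchySeq_of_dist_le_of_summable _ (dist_dyadicRescale_succ_le hF x) (hψ.mul_left _)

theorem norm_sub_le_of_tendsto_dyadicRescale (hF : ∀ y, ‖F (y + y) - F y - F y‖ ≤ ψ y) {x : E}
    (hψ : Summable fun n : ℕ => ψ ((2 : ℝ) ^ n • x)) {l : G}
    (hl : Tendsto (fun n => dyadicRescale F n x) atTop (𝓝 l)) :
    ‖F x - l‖ ≤ 1 / 2 * ∑' n : ℕ, ψ ((2 : ℝ) ^ n • x) := by
  have h := dist_le_tsum_of_dist_le_of_tendsto₀ _ (dist_dyadicRescale_succ_le hF x)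
    (hψ.mul_left (1 / 2)) hl
  rwa [dist_eq_norm, tsum_mul_left, dyadicRescale, pow_zero, inv_one, one_smul, one_smul] at h

theorem LinearMap.eq_of_norm_sub_le_half_tsum {L L' : E →ₗ[ℝ] G}
    (hL : ∀ x, ‖F x - L x‖ ≤ 1 / 2 * ∑' n : ℕ, ψ ((2 : ℝ) ^ n • x))
    (hL' : ∀ x, ‖F x - L' x‖ ≤ 1 / 2 * ∑' n : ℕ, ψ ((2 : ℝ) ^ n • x)) : L = L' := by
  ext x
  have tail := tendsto_sum_nat_add fun m => ψ ((2 : ℝ) ^ m • x)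
  refine sub_eq_zero.1 (norm_le_zero_iff.1 (ge_of_tendsto' tail fun n => ?_))
  set y := (2 : ℝ) ^ n • x
  calc ‖L x - L' x‖ = ‖((2 : ℝ) ^ n)⁻¹ • (L y - L' y)‖ := by
        rw [map_smul, map_smul, ← smul_sub, inv_smul_smul₀ (by positivity)]
    _ ≤ ‖L y - L' y‖ := norm_inv_two_pow_smul_le n _
    _ ≤ ‖L y - F y‖ + ‖F y - L' y‖ := norm_sub_le_norm_sub_add_norm_sub _ _ _
    _ ≤ ∑' m : ℕ, ψ ((2 : ℝ) ^ m • y) := by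
        rw [norm_sub_rev]; linarith [hL y, hL' y]
    _ = ∑' m : ℕ, ψ ((2 : ℝ) ^ (m + n) • x) := by simp only [y, smul_smul, pow_add]

end DyadicRescale

theorem Complex.exists_norm_eq_one_add_eq {z : ℂ} (hz : ‖z‖ ≤ 2) :
    ∃ a b : ℂ, ‖a‖ = 1 ∧ ‖b‖ = 1 ∧ a + b = z := by
  rcases eq_or_ne z 0 with rfl | hz0
  · exact ⟨1, -1, by simp, by simp, by ring⟩
  set t := ‖z‖ / 2
  set s := √(1 - t ^ 2)
  have ht : t ^ 2 ≤ 1 := by simp only [t]; nlinarith [norm_nonneg z]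
  have hs : t ^ 2 + s ^ 2 = 1 := by rw [Real.sq_sqrt (by linarith)]; ring
  have hu : ‖z / ‖z‖‖ = 1 := by simp [hz0]
  refine ⟨z / ‖z‖ * (t + s * I), z / ‖z‖ * (t + (-s) * I), ?_, ?_, ?_⟩
  · rw [norm_mul, hu, norm_add_mul_I, hs, Real.sqrt_one, one_mul]
  · have h := norm_add_mul_I t (-s)
    push_cast at h
    rw [norm_mul, hu, h, neg_sq, hs, Real.sqrt_one, one_mul]
  · have : (‖z‖ : ℂ) ≠ 0 := by exact_mod_cast norm_ne_zero_iff.2 hz0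
    simp only [t]; push_cast; field_simp; ring

theorem isLinearMap_of_map_unit_smul_add {E G : Type*} [AddCommGroup E] [Module ℂ E]
    [AddCommGroup G] [Module ℂ G] {L : E → G}
    (hL : ∀ c : ℂ, ‖c‖ = 1 → ∀ x y, L (c • x + c • y) = c • L x + c • L y) :
    IsLinearMap ℂ L := by
  have hadd : ∀ x y, L (x + y) = L x + L y := by simpa using hL 1 (by simp)
  have hzero : L 0 = 0 := by simpa using hadd 0 0
  have hunit : ∀ c : ℂ, ‖c‖ = 1 → ∀ x, L (c • x) = c • L x := fun c hc x => by
    simpa [hzero] using hL c hc x 0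
  refine ⟨hadd, fun c x => ?_⟩
  set N : ℕ := ⌈‖c‖⌉₊ + 1
  have hN : (N : ℂ) ≠ 0 := by exact_mod_cast N.succ_ne_zero
  obtain ⟨a, b, ha, hb, hab⟩ := Complex.exists_norm_eq_one_add_eq (z := c / N) (by
    rw [norm_div, Complex.norm_natCast, div_le_iff₀ (by positivity)]
    have : ‖c‖ ≤ N := (Nat.le_ceil _).trans (by simp [N])
    linarith)
  have hc : c = N * (a + b) := by rw [hab]; field_simp
  calc L (c • x) = N • L (a • x + b • x) := by
        rw [hc, mul_smul, add_smul, Nat.cast_smul_eq_nsmul]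
        exact map_nsmul (AddMonoidHom.mk' L hadd) N _
    _ = c • L x := by
        rw [hadd, hunit a ha, hunit b hb, hc, ← Nat.cast_smul_eq_nsmul ℂ, ← add_smul, mul_smul]

section ComplexStability

variable {E G : Type*} [NormedAddCommGroup E] [NormedSpace ℂ E]
  [NormedAddCommGroup G] [NormedSpace ℂ G] {F : E → G} {ψ : E → E → ℝ}

theorem map_unit_smul_add_of_tendsto_dyadicRescale
    (hF : ∀ c : ℂ, ‖c‖ = 1 → ∀ x y, ‖F (c • x + c • y) - c • F x - c • F y‖ ≤ ψ x y)
    (hψ : ∀ x y, Tendsto (fun n : ℕ => ψ ((2 : ℝ) ^ n • x) ((2 : ℝ) ^ n • y)) atTop (𝓝 0))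
    {L : E → G} (hL : ∀ x, Tendsto (fun n => dyadicRescale F n x) atTop (𝓝 (L x)))
    (c : ℂ) (hc : ‖c‖ = 1) (x y : E) : L (c • x + c • y) = c • L x + c • L y := by
  set defect : ℕ → G := fun n =>
    dyadicRescale F n (c • x + c • y) - c • dyadicRescale F n x - c • dyadicRescale F n y
  have hlim : Tendsto defect atTop (𝓝 (L (c • x + c • y) - c • L x - c • L y)) :=
    ((hL _).sub ((hL x).const_smul c)).sub ((hL y).const_smul c)
  have hzero : Tendsto defect atTop (𝓝 0) := by
    refine squeeze_zero_norm (fun n => ?_) (hψ x y)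
    have hscale : defect n = ((2 : ℝ) ^ n)⁻¹ • (F (c • (2 : ℝ) ^ n • x + c • (2 : ℝ) ^ n • y)
        - c • F ((2 : ℝ) ^ n • x) - c • F ((2 : ℝ) ^ n • y)) := by
      simp only [defect, dyadicRescale, smul_add, smul_sub, smul_comm c]
    rw [hscale]
    exact (norm_inv_two_pow_smul_le n _).trans (hF c hc _ _)
  rw [← sub_eq_zero, ← sub_sub]
  exact tendsto_nhds_unique hlim hzero

theorem exists_linearMap_tendsto_dyadicRescale [CompleteSpace G]
    (hψ : ∀ x y, Summable fun n : ℕ => ψ ((2 : ℝ) ^ n • x) ((2 : ℝ) ^ n • y))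
    (hF : ∀ c : ℂ, ‖c‖ = 1 → ∀ x y, ‖F (c • x + c • y) - c • F x - c • F y‖ ≤ ψ x y) :
    ∃ L : E →ₗ[ℂ] G,
      (∀ x, Tendsto (fun n => dyadicRescale F n x) atTop (𝓝 (L x))) ∧
      (∀ x, ‖F x - L x‖ ≤ 1 / 2 * ∑' n : ℕ, ψ ((2 : ℝ) ^ n • x) ((2 : ℝ) ^ n • x)) ∧
      ∀ L' : E →ₗ[ℂ] G,
        (∀ x, ‖F x - L' x‖ ≤ 1 / 2 * ∑' n : ℕ, ψ ((2 : ℝ) ^ n • x) ((2 : ℝ) ^ n • x)) →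
        L' = L := by
  have hF2 : ∀ y, ‖F (y + y) - F y - F y‖ ≤ ψ y y := fun y => by
    simpa using hF 1 (by simp) y y
  choose L hL using fun x => cauchySeq_tendsto_of_complete (cauchySeq_dyadicRescale hF2 (hψ x x))
  have hlin : IsLinearMap ℂ L := isLinearMap_of_map_unit_smul_add
    (map_unit_smul_add_of_tendsto_dyadicRescale hF (fun x y => (hψ x y).tendsto_atTop_zero) hL)
  have hbound : ∀ x, ‖F x - L x‖ ≤ 1 / 2 * ∑' n : ℕ, ψ ((2 : ℝ) ^ n • x) ((2 : ℝ) ^ n • x) :=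
    fun x => norm_sub_le_of_tendsto_dyadicRescale hF2 (hψ x x) (hL x)
  refine ⟨hlin.mk' L, hL, hbound, fun L' hL' => ?_⟩
  exact LinearMap.restrictScalars_injective ℝ
    (LinearMap.eq_of_norm_sub_le_half_tsum (ψ := fun x => ψ x x) hL' hbound)

end ComplexStability

structure IsTrilinear (R : Type*) {E F G H : Type*} [Semiring R]
    [AddCommMonoid E] [AddCommMonoid F] [AddCommMonoid G] [AddCommMonoid H]
    [Module R E] [Module R F] [Module R G] [Module R H] (m : E → F → G → H) : Prop where
  linear₁ : ∀ b c, IsLinearMap R fun a => m a b c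
  linear₂ : ∀ a c, IsLinearMap R fun b => m a b c
  linear₃ : ∀ a b, IsLinearMap R fun c => m a b c

namespace IsTrilinear

section Algebraic

variable {R E F G H : Type*} [Semiring R]
  [AddCommMonoid E] [AddCommMonoid F] [AddCommMonoid G] [AddCommMonoid H]
  [Module R E] [Module R F] [Module R G] [Module R H] {m : E → F → G → H}

theorem restrictScalars {S : Type*} [Semiring S] [Module S E] [Module S F] [Module S G]
    [Module S H] [SMul R S] [IsScalarTower R S E] [IsScalarTower R S F] [IsScalarTower R S G]
    [IsScalarTower R S H] (hm : IsTrilinear S m) : IsTrilinear R m :=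
  ⟨fun b c => (((hm.linear₁ b c).mk' _).restrictScalars R).isLinear,
    fun a c => (((hm.linear₂ a c).mk' _).restrictScalars R).isLinear,
    fun a b => (((hm.linear₃ a b).mk' _).restrictScalars R).isLinear⟩

theorem map_smul_smul_smul (hm : IsTrilinear R m) (r : R) (a : E) (b : F) (c : G) :
    m (r • a) (r • b) (r • c) = r ^ 3 • m a b c := by
  rw [(hm.linear₁ _ _).map_smul, (hm.linear₂ _ _).map_smul, (hm.linear₃ _ _).map_smul,
    smul_smul, smul_smul, pow_three, mul_assoc]

end Algebraic

variable {R E F G H : Type*} [Ring R]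
  [NormedAddCommGroup E] [NormedAddCommGroup F] [NormedAddCommGroup G] [NormedAddCommGroup H]
  [Module R E] [Module R F] [Module R G] [Module R H] {m : E → F → G → H}

theorem tendsto (hm : IsTrilinear R m) (hb : ∀ a b c, ‖m a b c‖ ≤ ‖a‖ * ‖b‖ * ‖c‖)
    {ι : Type*} {l : Filter ι} {a : ι → E} {b : ι → F} {c : ι → G} {a₀ : E} {b₀ : F} {c₀ : G}
    (ha : Tendsto a l (𝓝 a₀)) (hb' : Tendsto b l (𝓝 b₀)) (hc : Tendsto c l (𝓝 c₀)) :
    Tendsto (fun i => m (a i) (b i) (c i)) l (𝓝 (m a₀ b₀ c₀)) := by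
  have hsplit : ∀ i, m (a i) (b i) (c i) - m a₀ b₀ c₀
      = m (a i - a₀) (b i) (c i) + m a₀ (b i - b₀) (c i) + m a₀ b₀ (c i - c₀) := fun i => by
    rw [(hm.linear₁ _ _).map_sub, (hm.linear₂ _ _).map_sub, (hm.linear₃ _ _).map_sub]
    abel
  have hmajorant : Tendsto (fun i => ‖a i - a₀‖ * ‖b i‖ * ‖c i‖ + ‖a₀‖ * ‖b i - b₀‖ * ‖c i‖
      + ‖a₀‖ * ‖b₀‖ * ‖c i - c₀‖) l (𝓝 0) := by
    simpa using ((((ha.sub_const a₀).norm.mul hb'.norm).mul hc.norm).add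
      ((tendsto_const_nhds.mul (hb'.sub_const b₀).norm).mul hc.norm)).add
      (tendsto_const_nhds.mul (hc.sub_const c₀).norm)
  refine tendsto_iff_norm_sub_tendsto_zero.2
    (squeeze_zero (fun _ => norm_nonneg _) (fun i => ?_) hmajorant)
  rw [hsplit]
  exact (norm_add₃_le ..).trans (add_le_add_three (hb ..) (hb ..) (hb ..))

end IsTrilinear

section LieTernary

variable {A X : Type*} [NormedAddCommGroup A] [NormedSpace ℝ A]
  [NormedAddCommGroup X] [NormedSpace ℝ X]
  (tA : A → A → A → A) (mXAA : X → A → A → X) (mAAX : A → A → X → X)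

def bracketSum (g h k : A → A) (F : A → X) (u v w : A) : X :=
  twistedBracket mXAA mAAX g h k (F u) v w - twistedBracket mXAA mAAX g h k (F v) u w
    - twistedBracket mXAA mAAX g h k (F w) v u

def IsLieTernaryDerivation (σ τ ξ : A → A) (D : A → X) : Prop :=
  ∀ u v w, D (tA u v w) = bracketSum mXAA mAAX σ τ ξ D u v w

variable {tA mXAA mAAX}

theorem bracketSum_dyadicRescale (hX : IsTrilinear ℝ mXAA) (hY : IsTrilinear ℝ mAAX)
    (g h k : A → A) (F : A → X) (n : ℕ) (u v w : A) :
    bracketSum mXAA mAAX (dyadicRescale g n) (dyadicRescale h n) (dyadicRescale k n)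
        (dyadicRescale F n) u v w
      = ((2 : ℝ) ^ (3 * n))⁻¹ •
        bracketSum mXAA mAAX g h k F ((2 : ℝ) ^ n • u) ((2 : ℝ) ^ n • v) ((2 : ℝ) ^ n • w) := by
  simp only [bracketSum, twistedBracket, dyadicRescale, hX.map_smul_smul_smul,
    hY.map_smul_smul_smul, smul_sub, inv_pow, ← pow_mul, mul_comm n 3]

theorem tendsto_bracketSum (hX : IsTrilinear ℝ mXAA)
    (hXb : ∀ x a b, ‖mXAA x a b‖ ≤ ‖x‖ * ‖a‖ * ‖b‖) (hY : IsTrilinear ℝ mAAX)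
    (hYb : ∀ a b x, ‖mAAX a b x‖ ≤ ‖a‖ * ‖b‖ * ‖x‖)
    {ι : Type*} {l : Filter ι} {g h k : ι → A → A} {F : ι → A → X} {g₀ h₀ k₀ : A → A}
    {F₀ : A → X} (hg : Tendsto g l (𝓝 g₀)) (hh : Tendsto h l (𝓝 h₀)) (hk : Tendsto k l (𝓝 k₀))
    (hF : Tendsto F l (𝓝 F₀)) (u v w : A) :
    Tendsto (fun i => bracketSum mXAA mAAX (g i) (h i) (k i) (F i) u v w) l
      (𝓝 (bracketSum mXAA mAAX g₀ h₀ k₀ F₀ u v w)) := by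
  have hbracket : ∀ p q s : A, Tendsto (fun i => twistedBracket mXAA mAAX (g i) (h i) (k i)
      (F i p) q s) l (𝓝 (twistedBracket mXAA mAAX g₀ h₀ k₀ (F₀ p) q s)) := fun p q s =>
    (hX.tendsto hXb (tendsto_pi_nhds.1 hF p) (tendsto_pi_nhds.1 hh q)
      (tendsto_pi_nhds.1 hk s)).sub
    (hY.tendsto hYb (tendsto_pi_nhds.1 hg s) (tendsto_pi_nhds.1 hh q) (tendsto_pi_nhds.1 hF p))
  exact ((hbracket u v w).sub (hbracket v u w)).sub (hbracket w v u)

theorem isLieTernaryDerivation_of_tendsto_dyadicRescale (htA : IsTrilinear ℝ tA)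
    (hX : IsTrilinear ℝ mXAA) (hXb : ∀ x a b, ‖mXAA x a b‖ ≤ ‖x‖ * ‖a‖ * ‖b‖)
    (hY : IsTrilinear ℝ mAAX) (hYb : ∀ a b x, ‖mAAX a b x‖ ≤ ‖a‖ * ‖b‖ * ‖x‖)
    {f D : A → X} {g h k σ τ ξ : A → A} {ψ : A → A → A → ℝ}
    (hf : ∀ u v w, ‖f (tA u v w) - bracketSum mXAA mAAX g h k f u v w‖ ≤ ψ u v w)
    (hψ : ∀ u v w, Tendsto (fun n : ℕ =>
      ψ ((2 : ℝ) ^ n • u) ((2 : ℝ) ^ n • v) ((2 : ℝ) ^ n • w)) atTop (𝓝 0))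
    (hσ : Tendsto (dyadicRescale g) atTop (𝓝 σ)) (hτ : Tendsto (dyadicRescale h) atTop (𝓝 τ))
    (hξ : Tendsto (dyadicRescale k) atTop (𝓝 ξ)) (hD : Tendsto (dyadicRescale f) atTop (𝓝 D)) :
    IsLieTernaryDerivation tA mXAA mAAX σ τ ξ D := by
  intro u v w
  -- `D` is approximated at `tA u v w` with step `3 n`, matching the cubic scaling of `tA`
  set defect : ℕ → X := fun n => dyadicRescale f (3 * n) (tA u v w) - bracketSum mXAA mAAX
    (dyadicRescale g n) (dyadicRescale h n) (dyadicRescale k n) (dyadicRescale f n) u v w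
  have hlim : Tendsto defect atTop (𝓝 (D (tA u v w) - bracketSum mXAA mAAX σ τ ξ D u v w)) :=
    ((tendsto_pi_nhds.1 hD _).comp (tendsto_id.const_mul_atTop' three_pos)).sub
      (tendsto_bracketSum hX hXb hY hYb hσ hτ hξ hD u v w)
  have hzero : Tendsto defect atTop (𝓝 0) := by
    refine squeeze_zero_norm (fun n => ?_) (hψ u v w)
    have hscale : defect n = ((2 : ℝ) ^ (3 * n))⁻¹ • (f (tA ((2 : ℝ) ^ n • u)
        ((2 : ℝ) ^ n • v) ((2 : ℝ) ^ n • w)) - bracketSum mXAA mAAX g h k f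
        ((2 : ℝ) ^ n • u) ((2 : ℝ) ^ n • v) ((2 : ℝ) ^ n • w)) := by
      simp only [defect, dyadicRescale]
      rw [bracketSum_dyadicRescale hX hY, htA.map_smul_smul_smul, smul_sub, ← pow_mul,
        mul_comm n 3]
    rw [hscale]
    exact (norm_inv_two_pow_smul_le _ _).trans (hf _ _ _)
  exact sub_eq_zero.1 (tendsto_nhds_unique hlim hzero)

end LieTernary

theorem stability_lie_ternary_derivation_general
    {A X : Type*}
    [NormedAddCommGroup A] [NormedSpace ℂ A] [CompleteSpace A]
    [NormedAddCommGroup X] [NormedSpace ℂ X] [CompleteSpace X]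
    -- the ternary product of the Banach ternary algebra A
    (tA : A → A → A → A)
    (htA1 : ∀ b c, IsLinearMap ℂ fun a => tA a b c)
    (htA2 : ∀ a c, IsLinearMap ℂ fun b => tA a b c)
    (htA3 : ∀ a b, IsLinearMap ℂ fun c => tA a b c)
    -- the ternary Banach A-module products on X
    (mXAA : X → A → A → X) (mAXA : A → X → A → X) (mAAX : A → A → X → X)
    (hm1 : ∀ a b, IsLinearMap ℂ fun x : X => mXAA x a b)
    (hm2 : ∀ (x : X) b, IsLinearMap ℂ fun a => mXAA x a b)
    (hm3 : ∀ (x : X) a, IsLinearMap ℂ fun b => mXAA x a b)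
    (hm7 : ∀ b (x : X), IsLinearMap ℂ fun a => mAAX a b x)
    (hm8 : ∀ a (x : X), IsLinearMap ℂ fun b => mAAX a b x)
    (hm9 : ∀ a b, IsLinearMap ℂ fun x : X => mAAX a b x)
    -- the norm estimate for the module products
    (hmnorm : ∀ (x : X) a b,
      max (max ‖mXAA x a b‖ ‖mAXA a x b‖) ‖mAAX a b x‖ ≤ ‖a‖ * ‖b‖ * ‖x‖)
    -- the data of the theorem
    (f : A → X) (g h k : A → A)
    (hf0 : f 0 = 0)
    (φ : A → A → A → A → A → ℝ)
    (hφsum : ∀ x y u v w : A, Summable fun n : ℕ =>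
      φ ((2 ^ n : ℝ) • x) ((2 ^ n : ℝ) • y) ((2 ^ n : ℝ) • u) ((2 ^ n : ℝ) • v) ((2 ^ n : ℝ) • w))
    (hfineq : ∀ lam : ℂ, ‖lam‖ = 1 → ∀ x y u v w : A,
      ‖f (lam • x + lam • y + tA u v w) - lam • f x - lam • f y
          - twistedBracket mXAA mAAX g h k (f u) v w
          + twistedBracket mXAA mAAX g h k (f v) u w
          + twistedBracket mXAA mAAX g h k (f w) v u‖ ≤ φ x y u v w)
    (hgineq : ∀ lam : ℂ, ‖lam‖ = 1 → ∀ x y : A,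
      ‖g (lam • x + lam • y) - lam • g x - lam • g y‖ ≤ φ x y 0 0 0)
    (hhineq : ∀ lam : ℂ, ‖lam‖ = 1 → ∀ x y : A,
      ‖h (lam • x + lam • y) - lam • h x - lam • h y‖ ≤ φ x y 0 0 0)
    (hkineq : ∀ lam : ℂ, ‖lam‖ = 1 → ∀ x y : A,
      ‖k (lam • x + lam • y) - lam • k x - lam • k y‖ ≤ φ x y 0 0 0) :
    ∃ σ τ ξ : A →ₗ[ℂ] A, ∃ D : A →ₗ[ℂ] X,
      (∀ x : A, ‖g x - σ x‖ ≤
        (1 / 2) * ∑' n : ℕ, φ ((2 ^ n : ℝ) • x) ((2 ^ n : ℝ) • x) 0 0 0) ∧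
      (∀ x : A, ‖h x - τ x‖ ≤
        (1 / 2) * ∑' n : ℕ, φ ((2 ^ n : ℝ) • x) ((2 ^ n : ℝ) • x) 0 0 0) ∧
      (∀ x : A, ‖k x - ξ x‖ ≤
        (1 / 2) * ∑' n : ℕ, φ ((2 ^ n : ℝ) • x) ((2 ^ n : ℝ) • x) 0 0 0) ∧
      (∀ x : A, ‖f x - D x‖ ≤
        (1 / 2) * ∑' n : ℕ, φ ((2 ^ n : ℝ) • x) ((2 ^ n : ℝ) • x) 0 0 0) ∧
      -- D is a Lie ternary (σ,τ,ξ)-derivation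
      (∀ u v w : A, D (tA u v w) =
          twistedBracket mXAA mAAX (⇑σ) (⇑τ) (⇑ξ) (D u) v w
          - twistedBracket mXAA mAAX (⇑σ) (⇑τ) (⇑ξ) (D v) u w
          - twistedBracket mXAA mAAX (⇑σ) (⇑τ) (⇑ξ) (D w) v u) ∧
      -- the limit formulas
      (∀ x : A, Tendsto (fun n : ℕ => ((2 : ℝ) ^ n)⁻¹ • f ((2 ^ n : ℝ) • x))
        atTop (𝓝 (D x))) ∧
      (∀ x : A, Tendsto (fun n : ℕ => ((2 : ℝ) ^ n)⁻¹ • g ((2 ^ n : ℝ) • x))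
        atTop (𝓝 (σ x))) ∧
      (∀ x : A, Tendsto (fun n : ℕ => ((2 : ℝ) ^ n)⁻¹ • h ((2 ^ n : ℝ) • x))
        atTop (𝓝 (τ x))) ∧
      (∀ x : A, Tendsto (fun n : ℕ => ((2 : ℝ) ^ n)⁻¹ • k ((2 ^ n : ℝ) • x))
        atTop (𝓝 (ξ x))) ∧
      -- uniqueness
      (∀ σ' : A →ₗ[ℂ] A, (∀ x : A, ‖g x - σ' x‖ ≤
        (1 / 2) * ∑' n : ℕ, φ ((2 ^ n : ℝ) • x) ((2 ^ n : ℝ) • x) 0 0 0) → σ' = σ) ∧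
      (∀ τ' : A →ₗ[ℂ] A, (∀ x : A, ‖h x - τ' x‖ ≤
        (1 / 2) * ∑' n : ℕ, φ ((2 ^ n : ℝ) • x) ((2 ^ n : ℝ) • x) 0 0 0) → τ' = τ) ∧
      (∀ ξ' : A →ₗ[ℂ] A, (∀ x : A, ‖k x - ξ' x‖ ≤
        (1 / 2) * ∑' n : ℕ, φ ((2 ^ n : ℝ) • x) ((2 ^ n : ℝ) • x) 0 0 0) → ξ' = ξ) ∧
      (∀ D' : A →ₗ[ℂ] X, (∀ x : A, ‖f x - D' x‖ ≤
        (1 / 2) * ∑' n : ℕ, φ ((2 ^ n : ℝ) • x) ((2 ^ n : ℝ) • x) 0 0 0) → D' = D) := by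
  have hψ : ∀ x y : A, Summable fun n : ℕ => φ ((2 ^ n : ℝ) • x) ((2 ^ n : ℝ) • y) 0 0 0 :=
    fun x y => by simpa using hφsum x y 0 0 0
  have htA : IsTrilinear ℂ tA := ⟨htA1, htA2, htA3⟩
  have hX : IsTrilinear ℂ mXAA := ⟨hm1, hm2, hm3⟩
  have hY : IsTrilinear ℂ mAAX := ⟨hm7, hm8, hm9⟩
  have hXb : ∀ x a b, ‖mXAA x a b‖ ≤ ‖x‖ * ‖a‖ * ‖b‖ := fun x a b =>
    ((le_max_left _ _).trans ((le_max_left _ _).trans (hmnorm x a b))).trans_eq (by ring)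
  have hYb : ∀ a b x, ‖mAAX a b x‖ ≤ ‖a‖ * ‖b‖ * ‖x‖ := fun a b x =>
    (le_max_right _ _).trans (hmnorm x a b)
  have hfbracket : ∀ u v w, ‖f (tA u v w) - bracketSum mXAA mAAX g h k f u v w‖ ≤ φ 0 0 u v w :=
    fun u v w => by
      convert hfineq 1 (by simp) 0 0 u v w using 2
      simp only [bracketSum, one_smul, add_zero, zero_add, hf0, sub_zero]
      abel
  have hfadd : ∀ lam : ℂ, ‖lam‖ = 1 → ∀ x y : A,
      ‖f (lam • x + lam • y) - lam • f x - lam • f y‖ ≤ φ x y 0 0 0 := fun lam hlam x y => by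
    have hbracket : twistedBracket mXAA mAAX g h k (f 0) 0 0 = 0 := by
      simp only [twistedBracket, hf0, (hm1 _ _).map_zero, (hm9 _ _).map_zero, sub_zero]
    simpa [(htA1 0 0).map_zero, hbracket] using hfineq lam hlam x y 0 0 0
  obtain ⟨σ, hσ, hσb, hσu⟩ :=
    exists_linearMap_tendsto_dyadicRescale (ψ := fun x y => φ x y 0 0 0) hψ hgineq
  obtain ⟨τ, hτ, hτb, hτu⟩ :=
    exists_linearMap_tendsto_dyadicRescale (ψ := fun x y => φ x y 0 0 0) hψ hhineq
  obtain ⟨ξ, hξ, hξb, hξu⟩ :=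
    exists_linearMap_tendsto_dyadicRescale (ψ := fun x y => φ x y 0 0 0) hψ hkineq
  obtain ⟨D, hD, hDb, hDu⟩ :=
    exists_linearMap_tendsto_dyadicRescale (ψ := fun x y => φ x y 0 0 0) hψ hfadd
  have hder : IsLieTernaryDerivation tA mXAA mAAX σ τ ξ D :=
    isLieTernaryDerivation_of_tendsto_dyadicRescale htA.restrictScalars hX.restrictScalars hXb
      hY.restrictScalars hYb hfbracket
      (fun u v w => by simpa using (hφsum 0 0 u v w).tendsto_atTop_zero)
      (tendsto_pi_nhds.2 hσ) (tendsto_pi_nhds.2 hτ) (tendsto_pi_nhds.2 hξ) (tendsto_pi_nhds.2 hD)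
  exact ⟨σ, τ, ξ, D, hσb, hτb, hξb, hDb, hder, hD, hσ, hτ, hξ, hσu, hτu, hξu, hDu⟩

/-- Theorem 2.1: generalized Hyers–Ulam–Rassias stability of Lie ternary
`(σ,τ,ξ)`-derivations on Banach ternary algebras. -/
theorem stability_lie_ternary_derivation
    {A X : Type*}
    [NormedAddCommGroup A] [NormedSpace ℂ A] [CompleteSpace A]
    [NormedAddCommGroup X] [NormedSpace ℂ X] [CompleteSpace X]
    -- the ternary product of the Banach ternary algebra A
    (tA : A → A → A → A)
    (htA1 : ∀ b c, IsLinearMap ℂ fun a => tA a b c)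
    (htA2 : ∀ a c, IsLinearMap ℂ fun b => tA a b c)
    (htA3 : ∀ a b, IsLinearMap ℂ fun c => tA a b c)
    (htAassoc : ∀ a b c d e, tA (tA a b c) d e = tA a (tA b c d) e)
    (htAnorm : ∀ a b c, ‖tA a b c‖ ≤ ‖a‖ * ‖b‖ * ‖c‖)
    -- the ternary Banach A-module products on X
    (mXAA : X → A → A → X) (mAXA : A → X → A → X) (mAAX : A → A → X → X)
    (hm1 : ∀ a b, IsLinearMap ℂ fun x : X => mXAA x a b)
    (hm2 : ∀ (x : X) b, IsLinearMap ℂ fun a => mXAA x a b)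
    (hm3 : ∀ (x : X) a, IsLinearMap ℂ fun b => mXAA x a b)
    (hm4 : ∀ (x : X) b, IsLinearMap ℂ fun a => mAXA a x b)
    (hm5 : ∀ a b, IsLinearMap ℂ fun x : X => mAXA a x b)
    (hm6 : ∀ a (x : X), IsLinearMap ℂ fun b => mAXA a x b)
    (hm7 : ∀ b (x : X), IsLinearMap ℂ fun a => mAAX a b x)
    (hm8 : ∀ a (x : X), IsLinearMap ℂ fun b => mAAX a b x)
    (hm9 : ∀ a b, IsLinearMap ℂ fun x : X => mAAX a b x)
    -- the mixed associativity identities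
    (hx1 : ∀ a b c d (x : X), mAAX (tA a b c) d x = mAAX a (tA b c d) x)
    (hx1' : ∀ a b c d (x : X), mAAX a (tA b c d) x = mAAX a b (mAAX c d x))
    (hx2 : ∀ a b c d (x : X), mAXA (tA a b c) x d = mAXA a (mAAX b c x) d)
    (hx2' : ∀ a b c d (x : X), mAXA a (mAAX b c x) d = mAAX a b (mAXA c x d))
    (hx3 : ∀ a b c d (x : X), mXAA (mXAA x a b) c d = mXAA x (tA a b c) d)
    (hx3' : ∀ a b c d (x : X), mXAA x (tA a b c) d = mXAA x a (tA b c d))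
    (hx4 : ∀ a b c d (x : X), mXAA (mAXA a x b) c d = mAXA a (mXAA x b c) d)
    (hx4' : ∀ a b c d (x : X), mAXA a (mXAA x b c) d = mAXA a x (tA b c d))
    (hx5 : ∀ a b c d (x : X), mXAA (mAAX a b x) c d = mAXA a (mAXA b x c) d)
    (hx5' : ∀ a b c d (x : X), mAXA a (mAXA b x c) d = mAAX a b (mXAA x c d))
    -- the norm estimate for the module products
    (hmnorm : ∀ (x : X) a b,
      max (max ‖mXAA x a b‖ ‖mAXA a x b‖) ‖mAAX a b x‖ ≤ ‖a‖ * ‖b‖ * ‖x‖)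
    -- the data of the theorem
    (f : A → X) (g h k : A → A)
    (hf0 : f 0 = 0) (hg0 : g 0 = 0) (hh0 : h 0 = 0) (hk0 : k 0 = 0)
    (φ : A → A → A → A → A → ℝ)
    (hφnonneg : ∀ x y u v w, 0 ≤ φ x y u v w)
    (hφsum : ∀ x y u v w : A, Summable fun n : ℕ =>
      φ ((2 ^ n : ℝ) • x) ((2 ^ n : ℝ) • y) ((2 ^ n : ℝ) • u) ((2 ^ n : ℝ) • v) ((2 ^ n : ℝ) • w))
    (hfineq : ∀ lam : ℂ, ‖lam‖ = 1 → ∀ x y u v w : A,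
      ‖f (lam • x + lam • y + tA u v w) - lam • f x - lam • f y
          - twistedBracket mXAA mAAX g h k (f u) v w
          + twistedBracket mXAA mAAX g h k (f v) u w
          + twistedBracket mXAA mAAX g h k (f w) v u‖ ≤ φ x y u v w)
    (hgineq : ∀ lam : ℂ, ‖lam‖ = 1 → ∀ x y : A,
      ‖g (lam • x + lam • y) - lam • g x - lam • g y‖ ≤ φ x y 0 0 0)
    (hhineq : ∀ lam : ℂ, ‖lam‖ = 1 → ∀ x y : A,
      ‖h (lam • x + lam • y) - lam • h x - lam • h y‖ ≤ φ x y 0 0 0)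
    (hkineq : ∀ lam : ℂ, ‖lam‖ = 1 → ∀ x y : A,
      ‖k (lam • x + lam • y) - lam • k x - lam • k y‖ ≤ φ x y 0 0 0) :
    ∃ σ τ ξ : A →ₗ[ℂ] A, ∃ D : A →ₗ[ℂ] X,
      (∀ x : A, ‖g x - σ x‖ ≤
        (1 / 2) * ∑' n : ℕ, φ ((2 ^ n : ℝ) • x) ((2 ^ n : ℝ) • x) 0 0 0) ∧
      (∀ x : A, ‖h x - τ x‖ ≤
        (1 / 2) * ∑' n : ℕ, φ ((2 ^ n : ℝ) • x) ((2 ^ n : ℝ) • x) 0 0 0) ∧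
      (∀ x : A, ‖k x - ξ x‖ ≤
        (1 / 2) * ∑' n : ℕ, φ ((2 ^ n : ℝ) • x) ((2 ^ n : ℝ) • x) 0 0 0) ∧
      (∀ x : A, ‖f x - D x‖ ≤
        (1 / 2) * ∑' n : ℕ, φ ((2 ^ n : ℝ) • x) ((2 ^ n : ℝ) • x) 0 0 0) ∧
      -- D is a Lie ternary (σ,τ,ξ)-derivation
      (∀ u v w : A, D (tA u v w) =
          twistedBracket mXAA mAAX (⇑σ) (⇑τ) (⇑ξ) (D u) v w
          - twistedBracket mXAA mAAX (⇑σ) (⇑τ) (⇑ξ) (D v) u w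
          - twistedBracket mXAA mAAX (⇑σ) (⇑τ) (⇑ξ) (D w) v u) ∧
      -- the limit formulas
      (∀ x : A, Tendsto (fun n : ℕ => ((2 : ℝ) ^ n)⁻¹ • f ((2 ^ n : ℝ) • x))
        atTop (𝓝 (D x))) ∧
      (∀ x : A, Tendsto (fun n : ℕ => ((2 : ℝ) ^ n)⁻¹ • g ((2 ^ n : ℝ) • x))
        atTop (𝓝 (σ x))) ∧
      (∀ x : A, Tendsto (fun n : ℕ => ((2 : ℝ) ^ n)⁻¹ • h ((2 ^ n : ℝ) • x))
        atTop (𝓝 (τ x))) ∧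
      (∀ x : A, Tendsto (fun n : ℕ => ((2 : ℝ) ^ n)⁻¹ • k ((2 ^ n : ℝ) • x))
        atTop (𝓝 (ξ x))) ∧
      -- uniqueness
      (∀ σ' : A →ₗ[ℂ] A, (∀ x : A, ‖g x - σ' x‖ ≤
        (1 / 2) * ∑' n : ℕ, φ ((2 ^ n : ℝ) • x) ((2 ^ n : ℝ) • x) 0 0 0) → σ' = σ) ∧
      (∀ τ' : A →ₗ[ℂ] A, (∀ x : A, ‖h x - τ' x‖ ≤
        (1 / 2) * ∑' n : ℕ, φ ((2 ^ n : ℝ) • x) ((2 ^ n : ℝ) • x) 0 0 0) → τ' = τ) ∧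
      (∀ ξ' : A →ₗ[ℂ] A, (∀ x : A, ‖k x - ξ' x‖ ≤
        (1 / 2) * ∑' n : ℕ, φ ((2 ^ n : ℝ) • x) ((2 ^ n : ℝ) • x) 0 0 0) → ξ' = ξ) ∧
      (∀ D' : A →ₗ[ℂ] X, (∀ x : A, ‖f x - D' x‖ ≤
        (1 / 2) * ∑' n : ℕ, φ ((2 ^ n : ℝ) • x) ((2 ^ n : ℝ) • x) 0 0 0) → D' = D) :=
  stability_lie_ternary_derivation_general tA htA1 htA2 htA3 mXAA mAXA mAAX hm1 hm2 hm3 hm7 hm8 hm9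
    hmnorm f g h k hf0 φ hφsum hfineq hgineq hhineq hkineq
end

section
/- Let A be a Banach ternary algebra and X a ternary Banach A-module, and let 𝕋¹ = {λ ∈ ℂ : |λ| = 1}. Suppose f : A → X is a mapping with f(0) = 0, g, h, k : A → A are mappings with g(0) = h(0) = k(0) = 0, and φ : A×A×A → [0,∞) is a function such that φ̃(x,y,u) := (1/2) Σ_{n=0}^∞ φ(2ⁿx, 2ⁿy, 2ⁿu) < ∞ for all x,y,u ∈ A, and such that for all λ ∈ 𝕋¹ and all x,y,u ∈ A: ‖f(λx + λy + [uuu]_A) − λf(x) − λf(y) − [[f(u)uu]_X]_{(g,h,k)} + [[f(u)uu]_X]_{(g,h,k)} + [[f(u)uu]_X]_{(g,h,k)}‖ ≤ φ(x,y,u), ‖g(λx+λy) − λg(x) − λg(y)‖ ≤ φ(x,y,0), ‖h(λx+λy) − λh(x) − λh(y)‖ ≤ φ(x,y,0), and ‖k(λx+λy) − λk(x) − λk(y)‖ ≤ φ(x,y,0). Then there exist unique ℂ-linear mappings σ, τ, ξ : A → A with ‖g(x) − σ(x)‖ ≤ φ̃(x,x,0), ‖h(x) − τ(x)‖ ≤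 φ̃(x,x,0), ‖k(x) − ξ(x)‖ ≤ φ̃(x,x,0) for all x ∈ A, and there exists a unique ℂ-linear mapping D : A → X with ‖f(x) − D(x)‖ ≤ φ̃(x,x,0) for all x ∈ A which satisfies the Jordan Lie ternary (σ,τ,ξ)-derivation identity D([uuu]_A) = [[D(u)uu]_X]_{(σ,τ,ξ)} − [[D(u)uu]_X]_{(σ,τ,ξ)} − [[D(u)uu]_X]_{(σ,τ,ξ)} for all u ∈ A. -/
/-!
Hyers' direct method. Taking `λ = 1` in the stability inequalities makes `2⁻ⁿ f (2ⁿ x)`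
a Cauchy sequence; its limit satisfies `L (λ x + λ y) = λ L x + λ L y` for every unimodular
`λ` exactly, which forces `L` to be `ℂ`-linear. The Jordan Lie identity is homogeneous of
degree three in `u`, so its defect at `2ⁿ u`, scaled by `2⁻³ⁿ`, tends both to the defect of
the limit maps and, by the hypothesis on `f` at `x = y = 0`, to `0`.
-/

open Filter Topology

namespace Complex

lemma exists_norm_eq_one_add_eq_s2 {c : ℂ} (hc : ‖c‖ ≤ 2) :
    ∃ a b : ℂ, ‖a‖ = 1 ∧ ‖b‖ = 1 ∧ a + b = c := by
  set α := Real.arccos (‖c‖ / 2)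
  have hcos : Real.cos α = ‖c‖ / 2 :=
    Real.cos_arccos (by linarith [norm_nonneg c]) (by linarith)
  refine ⟨exp ((arg c + α : ℝ) * I), exp ((arg c - α : ℝ) * I),
    norm_exp_ofReal_mul_I _, norm_exp_ofReal_mul_I _, ?_⟩
  calc exp ((arg c + α : ℝ) * I) + exp ((arg c - α : ℝ) * I)
      = exp (arg c * I) * (2 * cos α) := by
        rw [two_cos, mul_add, ← exp_add, ← exp_add]
        push_cast
        ring_nf
    _ = c := by
        rw [← ofReal_cos, hcos]
        conv_rhs => rw [← norm_mul_exp_arg_mul_I c]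
        push_cast
        ring

end Complex

/-- Every complex number is a natural multiple of a sum of two numbers on the unit circle. -/
lemma AddMonoidHom.map_smul_of_map_smul_of_norm_eq_one {E F : Type*} [AddCommGroup E]
    [Module ℂ E] [AddCommGroup F] [Module ℂ F] (L : E →+ F)
    (hL : ∀ c : ℂ, ‖c‖ = 1 → ∀ x, L (c • x) = c • L x) (c : ℂ) (x : E) :
    L (c • x) = c • L x := by
  obtain ⟨m, hm⟩ := exists_nat_gt (‖c‖ / 2)
  have hm_pos : (0 : ℝ) < m := (div_nonneg (norm_nonneg c) two_pos.le).trans_lt hm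
  have hm0 : (m : ℂ) ≠ 0 := by exact_mod_cast hm_pos.ne'
  obtain ⟨a, b, ha, hb, hab⟩ := Complex.exists_norm_eq_one_add_eq_s2 (c := c / m) (by
    rw [norm_div, Complex.norm_natCast, div_le_iff₀ hm_pos]
    linarith)
  have hc : c = (m : ℂ) * (a + b) := by rw [hab, mul_div_cancel₀ _ hm0]
  rw [hc, mul_smul, mul_smul, Nat.cast_smul_eq_nsmul, Nat.cast_smul_eq_nsmul, map_nsmul,
    add_smul, add_smul, map_add, hL a ha, hL b hb]

lemma norm_inv_smul_le_of_one_le {F : Type*} [NormedAddCommGroup F] [NormedSpace ℝ F] {r : ℝ}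
    (hr : 1 ≤ r) (v : F) : ‖r⁻¹ • v‖ ≤ ‖v‖ := by
  rw [norm_smul, norm_inv, Real.norm_of_nonneg (by linarith)]
  exact mul_le_of_le_one_left (norm_nonneg v) (inv_le_one_of_one_le₀ hr)

section HyersSequence

variable {E F : Type*} [NormedAddCommGroup E] [NormedSpace ℝ E]
  [NormedAddCommGroup F] [NormedSpace ℝ F]

noncomputable def hyersSeq (f : E → F) (x : E) (n : ℕ) : F :=
  (2 ^ n : ℝ)⁻¹ • f ((2 ^ n : ℝ) • x)

variable {ψ : E → E → ℝ} {f : E → F}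

lemma hyersSeq_zero (f : E → F) (x : E) : hyersSeq f x 0 = f x := by
  simp [hyersSeq]

lemma hyersSeq_sub_succ (f : E → F) (x : E) (n : ℕ) :
    hyersSeq f x n - hyersSeq f x (n + 1) =
      -((2 ^ (n + 1) : ℝ)⁻¹ • (f ((2 ^ n : ℝ) • x + (2 ^ n : ℝ) • x)
        - f ((2 ^ n : ℝ) • x) - f ((2 ^ n : ℝ) • x))) := by
  rw [← two_smul ℝ, smul_smul, ← pow_succ']
  simp only [hyersSeq, pow_succ]
  module

lemma dist_hyersSeq_succ_le (hf : ∀ x y, ‖f (x + y) - f x - f y‖ ≤ ψ x y) (x : E) (n : ℕ) :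
    dist (hyersSeq f x n) (hyersSeq f x (n + 1)) ≤
      ψ ((2 ^ n : ℝ) • x) ((2 ^ n : ℝ) • x) / 2 := by
  set y := (2 ^ n : ℝ) • x
  have hψ : 0 ≤ ψ y y := (norm_nonneg _).trans (hf y y)
  rw [dist_eq_norm, hyersSeq_sub_succ, norm_neg, norm_smul, norm_inv,
    Real.norm_of_nonneg (by positivity)]
  calc (2 ^ (n + 1) : ℝ)⁻¹ * ‖f (y + y) - f y - f y‖
      ≤ (2 ^ 1 : ℝ)⁻¹ * ψ y y := by
        gcongr
        · norm_num
        · omega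
        · exact hf y y
    _ = ψ y y / 2 := by ring

lemma cauchySeq_hyersSeq (hf : ∀ x y, ‖f (x + y) - f x - f y‖ ≤ ψ x y) {x : E}
    (hψ : Summable fun n : ℕ => ψ ((2 ^ n : ℝ) • x) ((2 ^ n : ℝ) • x)) :
    CauchySeq (hyersSeq f x) :=
  cauchySeq_of_dist_le_of_summable _ (dist_hyersSeq_succ_le hf x) (hψ.div_const 2)

lemma norm_sub_le_of_tendsto_hyersSeq (hf : ∀ x y, ‖f (x + y) - f x - f y‖ ≤ ψ x y) {x : E}
    (hψ : Summable fun n : ℕ => ψ ((2 ^ n : ℝ) • x) ((2 ^ n : ℝ) • x)) {l : F}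
    (hl : Tendsto (hyersSeq f x) atTop (𝓝 l)) :
    ‖f x - l‖ ≤ (1 / 2) * ∑' n : ℕ, ψ ((2 ^ n : ℝ) • x) ((2 ^ n : ℝ) • x) := by
  have := dist_le_tsum_of_dist_le_of_tendsto₀ _ (dist_hyersSeq_succ_le hf x)
    (hψ.div_const 2) hl
  rw [hyersSeq_zero, dist_eq_norm, tsum_div_const] at this
  linarith

lemma tendsto_tsum_comp_pow_two_smul (ψ : E → E → ℝ) (x : E) :
    Tendsto (fun n : ℕ => ∑' m : ℕ,
      ψ ((2 ^ m : ℝ) • (2 ^ n : ℝ) • x) ((2 ^ m : ℝ) • (2 ^ n : ℝ) • x)) atTop (𝓝 0) := by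
  simp_rw [smul_smul, ← pow_add]
  exact tendsto_sum_nat_add fun k => ψ ((2 ^ k : ℝ) • x) ((2 ^ k : ℝ) • x)

lemma LinearMap.eq_of_norm_sub_le {β : E → ℝ}
    (hβ : ∀ x, Tendsto (fun n : ℕ => β ((2 ^ n : ℝ) • x)) atTop (𝓝 0)) {L L' : E →ₗ[ℝ] F}
    (hL : ∀ x, ‖f x - L x‖ ≤ β x) (hL' : ∀ x, ‖f x - L' x‖ ≤ β x) : L = L' := by
  ext x
  have hle : ∀ n : ℕ, ‖L x - L' x‖ ≤ 2 * β ((2 ^ n : ℝ) • x) := fun n => by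
    set y := (2 ^ n : ℝ) • x
    have hy : L x - L' x = (2 ^ n : ℝ)⁻¹ • ((f y - L' y) - (f y - L y)) := by
      rw [sub_sub_sub_cancel_left, map_smul, map_smul, ← smul_sub,
        inv_smul_smul₀ (by positivity)]
    calc ‖L x - L' x‖ ≤ ‖(f y - L' y) - (f y - L y)‖ := by
          rw [hy]; exact norm_inv_smul_le_of_one_le (one_le_pow₀ one_le_two) _
      _ ≤ ‖f y - L' y‖ + ‖f y - L y‖ := norm_sub_le _ _
      _ ≤ 2 * β y := by linarith [hL y, hL' y]
  have := ge_of_tendsto' ((hβ x).const_mul 2) hle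
  rw [mul_zero, norm_le_zero_iff, sub_eq_zero] at this
  exact this

end HyersSequence

section CircleStability

variable {E F : Type*} [NormedAddCommGroup E] [NormedSpace ℂ E]
  [NormedAddCommGroup F] [NormedSpace ℂ F] {ψ : E → E → ℝ} {f : E → F}

lemma hyersSeq_smul_add_smul_sub (f : E → F) (c : ℂ) (x y : E) (n : ℕ) :
    hyersSeq f (c • x + c • y) n - c • hyersSeq f x n - c • hyersSeq f y n =
      (2 ^ n : ℝ)⁻¹ • (f (c • (2 ^ n : ℝ) • x + c • (2 ^ n : ℝ) • y)
        - c • f ((2 ^ n : ℝ) • x) - c • f ((2 ^ n : ℝ) • y)) := by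
  simp only [hyersSeq, smul_add, smul_sub, smul_comm c ((2 ^ n : ℝ)⁻¹),
    smul_comm c (2 ^ n : ℝ)]

lemma map_smul_add_smul_of_tendsto_hyersSeq
    (hf : ∀ c : ℂ, ‖c‖ = 1 → ∀ x y, ‖f (c • x + c • y) - c • f x - c • f y‖ ≤ ψ x y)
    (hψ : ∀ x y, Tendsto (fun n : ℕ => ψ ((2 ^ n : ℝ) • x) ((2 ^ n : ℝ) • y)) atTop (𝓝 0))
    {L : E → F} (hL : ∀ x, Tendsto (hyersSeq f x) atTop (𝓝 (L x)))
    {c : ℂ} (hc : ‖c‖ = 1) (x y : E) :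
    L (c • x + c • y) = c • L x + c • L y := by
  have hlim := ((hL (c • x + c • y)).sub ((hL x).const_smul c)).sub ((hL y).const_smul c)
  have hzero : Tendsto (fun n => hyersSeq f (c • x + c • y) n - c • hyersSeq f x n
      - c • hyersSeq f y n) atTop (𝓝 0) := by
    refine squeeze_zero_norm (fun n => ?_) (hψ x y)
    rw [hyersSeq_smul_add_smul_sub]
    exact (norm_inv_smul_le_of_one_le (one_le_pow₀ one_le_two) _).trans (hf c hc _ _)
  rw [← sub_eq_zero, ← sub_sub]
  exact tendsto_nhds_unique hlim hzero

theorem exists_linearMap_norm_sub_le_of_norm_smul_add_smul_sub_le [CompleteSpace F]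
    (hf : ∀ c : ℂ, ‖c‖ = 1 → ∀ x y, ‖f (c • x + c • y) - c • f x - c • f y‖ ≤ ψ x y)
    (hψ : ∀ x y, Summable fun n : ℕ => ψ ((2 ^ n : ℝ) • x) ((2 ^ n : ℝ) • y)) :
    ∃ L : E →ₗ[ℂ] F, (∀ x, Tendsto (hyersSeq f x) atTop (𝓝 (L x))) ∧
      (∀ x, ‖f x - L x‖ ≤ (1 / 2) * ∑' n : ℕ, ψ ((2 ^ n : ℝ) • x) ((2 ^ n : ℝ) • x)) ∧
      ∀ L' : E →ₗ[ℂ] F,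
        (∀ x, ‖f x - L' x‖ ≤ (1 / 2) * ∑' n : ℕ, ψ ((2 ^ n : ℝ) • x) ((2 ^ n : ℝ) • x)) →
        L' = L := by
  have hadd : ∀ x y, ‖f (x + y) - f x - f y‖ ≤ ψ x y := by simpa using hf 1 (by simp)
  choose L hL using fun x =>
    cauchySeq_tendsto_of_complete (cauchySeq_hyersSeq hadd (hψ x x))
  have hL_eq : ∀ c : ℂ, ‖c‖ = 1 → ∀ x y, L (c • x + c • y) = c • L x + c • L y :=
    fun c hc => map_smul_add_smul_of_tendsto_hyersSeq hf
      (fun x y => (hψ x y).tendsto_atTop_zero) hL hc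
  let L₀ : E →+ F := AddMonoidHom.mk' L fun x y => by simpa using hL_eq 1 norm_one x y
  have hL_circle : ∀ c : ℂ, ‖c‖ = 1 → ∀ x, L₀ (c • x) = c • L₀ x := fun c hc x => by
    have h2 : (2 : ℂ) • L₀ (c • x) = (2 : ℂ) • (c • L₀ x) := by
      rw [two_smul, two_smul, ← L₀.map_add]
      exact hL_eq c hc x x
    exact smul_right_injective F two_ne_zero h2
  let Lℂ : E →ₗ[ℂ] F :=
    { L₀ with map_smul' := L₀.map_smul_of_map_smul_of_norm_eq_one hL_circle }
  refine ⟨Lℂ, hL, fun x => norm_sub_le_of_tendsto_hyersSeq hadd (hψ x x) (hL x),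
    fun L' hL' => LinearMap.restrictScalars_injective ℝ ?_⟩
  refine LinearMap.eq_of_norm_sub_le (fun x => ?_) hL' fun x =>
    norm_sub_le_of_tendsto_hyersSeq hadd (hψ x x) (hL x)
  simpa only [mul_zero] using (tendsto_tsum_comp_pow_two_smul ψ x).const_mul (1 / 2)

end CircleStability

section Trilinear

variable {R E₁ E₂ E₃ F : Type*}

def IsTrilinear_s2 (R : Type*) [Semiring R] [AddCommMonoid E₁] [Module R E₁] [AddCommMonoid E₂]
    [Module R E₂] [AddCommMonoid E₃] [Module R E₃] [AddCommMonoid F] [Module R F]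
    (m : E₁ → E₂ → E₃ → F) : Prop :=
  (∀ b c, IsLinearMap R fun a => m a b c) ∧ (∀ a c, IsLinearMap R fun b => m a b c) ∧
    ∀ a b, IsLinearMap R fun c => m a b c

lemma IsTrilinear_s2.tendsto [Semiring R] [NormedAddCommGroup E₁] [NormedAddCommGroup E₂]
    [NormedAddCommGroup E₃] [NormedAddCommGroup F] [Module R E₁] [Module R E₂] [Module R E₃]
    [Module R F] {m : E₁ → E₂ → E₃ → F} (hm : IsTrilinear_s2 R m) {C : ℝ}
    (hC : ∀ a b c, ‖m a b c‖ ≤ C * ‖a‖ * ‖b‖ * ‖c‖)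
    {a : ℕ → E₁} {b : ℕ → E₂} {c : ℕ → E₃} {a₀ : E₁} {b₀ : E₂} {c₀ : E₃}
    (ha : Tendsto a atTop (𝓝 a₀)) (hb : Tendsto b atTop (𝓝 b₀)) (hc : Tendsto c atTop (𝓝 c₀)) :
    Tendsto (fun n => m (a n) (b n) (c n)) atTop (𝓝 (m a₀ b₀ c₀)) := by
  obtain ⟨h₁, h₂, h₃⟩ := hm
  have hsplit : ∀ n, m (a n) (b n) (c n) - m a₀ b₀ c₀ =
      m (a n - a₀) (b n) (c n) + m a₀ (b n - b₀) (c n) + m a₀ b₀ (c n - c₀) := fun n => by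
    rw [(h₁ _ _).map_sub, (h₂ _ _).map_sub, (h₃ _ _).map_sub]
    abel
  have ha' := tendsto_iff_norm_sub_tendsto_zero.1 ha
  have hb' := tendsto_iff_norm_sub_tendsto_zero.1 hb
  have hc' := tendsto_iff_norm_sub_tendsto_zero.1 hc
  have hbound : Tendsto (fun n => C * ‖a n - a₀‖ * ‖b n‖ * ‖c n‖
      + C * ‖a₀‖ * ‖b n - b₀‖ * ‖c n‖ + C * ‖a₀‖ * ‖b₀‖ * ‖c n - c₀‖) atTop (𝓝 0) := by
    simpa using ((((tendsto_const_nhds (x := C)).mul ha').mul hb.norm).mul hc.norm).add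
      (((tendsto_const_nhds (x := C * ‖a₀‖)).mul hb').mul hc.norm) |>.add
      ((tendsto_const_nhds (x := C * ‖a₀‖ * ‖b₀‖)).mul hc')
  refine tendsto_iff_norm_sub_tendsto_zero.2
    (squeeze_zero (fun n => norm_nonneg _) (fun n => ?_) hbound)
  rw [hsplit]
  exact norm_add₃_le.trans (add_le_add_three (hC _ _ _) (hC _ _ _) (hC _ _ _))

lemma IsLinearMap.map_real_smul {V W : Type*} [AddCommGroup V] [Module ℂ V] [AddCommGroup W]
    [Module ℂ W] {T : V → W} (hT : IsLinearMap ℂ T) (r : ℝ) (v : V) : T (r • v) = r • T v :=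
  (hT.mk' T).map_smul_of_tower r v

lemma IsTrilinear_s2.map_real_smul [AddCommGroup E₁] [Module ℂ E₁] [AddCommGroup E₂] [Module ℂ E₂]
    [AddCommGroup E₃] [Module ℂ E₃] [AddCommGroup F] [Module ℂ F] {m : E₁ → E₂ → E₃ → F}
    (hm : IsTrilinear_s2 ℂ m) (r : ℝ) (a : E₁) (b : E₂) (c : E₃) :
    m (r • a) (r • b) (r • c) = r ^ 3 • m a b c :=
  calc m (r • a) (r • b) (r • c) = r • m a (r • b) (r • c) := (hm.1 _ _).map_real_smul r a
    _ = r • r • m a b (r • c) := congrArg (r • ·) ((hm.2.1 _ _).map_real_smul r b)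
    _ = r • r • r • m a b c := congrArg (fun v => r • r • v) ((hm.2.2 _ _).map_real_smul r c)
    _ = r ^ 3 • m a b c := by rw [smul_smul, smul_smul, pow_three, mul_assoc]

end Trilinear

section JordanDefect

variable {A X : Type*} [NormedAddCommGroup A] [NormedSpace ℂ A]
  [NormedAddCommGroup X] [NormedSpace ℂ X]
  {tA : A → A → A → A} {mXAA : X → A → A → X} {mAAX : A → A → X → X}

/-- `D` is a Jordan Lie ternary `(σ,τ,ξ)`-derivation exactly when this vanishes identically. -/
def jordanDefect (tA : A → A → A → A) (mXAA : X → A → A → X) (mAAX : A → A → X → X)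
    (D : A → X) (σ τ ξ : A → A) (u : A) : X :=
  D (tA u u u) + twistedBracket mXAA mAAX σ τ ξ (D u) u u

lemma inv_pow_three_smul_jordanDefect (htA : IsTrilinear_s2 ℂ tA) (hmXAA : IsTrilinear_s2 ℂ mXAA)
    (hmAAX : IsTrilinear_s2 ℂ mAAX) (f : A → X) (g h k : A → A) (u : A) (n : ℕ) :
    ((2 ^ n : ℝ) ^ 3)⁻¹ • jordanDefect tA mXAA mAAX f g h k ((2 ^ n : ℝ) • u) =
      hyersSeq f (tA u u u) (n * 3) + twistedBracket mXAA mAAX (hyersSeq g · n)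
        (hyersSeq h · n) (hyersSeq k · n) (hyersSeq f u n) u u := by
  simp only [jordanDefect, twistedBracket, hyersSeq, smul_add, smul_sub, ← inv_pow,
    ← hmXAA.map_real_smul, ← hmAAX.map_real_smul, htA.map_real_smul, pow_mul]

lemma jordanDefect_eq_zero_of_tendsto (htA : IsTrilinear_s2 ℂ tA) (hmXAA : IsTrilinear_s2 ℂ mXAA)
    (hmAAX : IsTrilinear_s2 ℂ mAAX) {C : ℝ} (hCXAA : ∀ x a b, ‖mXAA x a b‖ ≤ C * ‖x‖ * ‖a‖ * ‖b‖)
    (hCAAX : ∀ a b x, ‖mAAX a b x‖ ≤ C * ‖a‖ * ‖b‖ * ‖x‖)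
    {f D : A → X} {g h k σ τ ξ : A → A} {u : A}
    (hD : ∀ x, Tendsto (hyersSeq f x) atTop (𝓝 (D x)))
    (hσ : Tendsto (hyersSeq g u) atTop (𝓝 (σ u))) (hτ : Tendsto (hyersSeq h u) atTop (𝓝 (τ u)))
    (hξ : Tendsto (hyersSeq k u) atTop (𝓝 (ξ u)))
    (hf : Tendsto (fun n : ℕ => jordanDefect tA mXAA mAAX f g h k ((2 ^ n : ℝ) • u))
      atTop (𝓝 0)) :
    jordanDefect tA mXAA mAAX D σ τ ξ u = 0 := by
  have hlim : Tendsto (fun n : ℕ =>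
      ((2 ^ n : ℝ) ^ 3)⁻¹ • jordanDefect tA mXAA mAAX f g h k ((2 ^ n : ℝ) • u)) atTop
      (𝓝 (jordanDefect tA mXAA mAAX D σ τ ξ u)) := by
    simp only [inv_pow_three_smul_jordanDefect htA hmXAA hmAAX]
    exact ((hD _).comp (tendsto_id.atTop_mul_const' (by norm_num))).add
      ((hmXAA.tendsto hCXAA (hD u) hτ hξ).sub (hmAAX.tendsto hCAAX hσ hτ (hD u)))
  refine tendsto_nhds_unique hlim
    (squeeze_zero_norm (fun n => ?_) (tendsto_zero_iff_norm_tendsto_zero.1 hf))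
  exact norm_inv_smul_le_of_one_le (one_le_pow₀ (one_le_pow₀ one_le_two)) _

end JordanDefect

theorem stability_jordan_lie_ternary_derivation_general
    {A X : Type*}
    [NormedAddCommGroup A] [NormedSpace ℂ A] [CompleteSpace A]
    [NormedAddCommGroup X] [NormedSpace ℂ X] [CompleteSpace X]
    -- the ternary product of the Banach ternary algebra A
    (tA : A → A → A → A)
    (htA1 : ∀ b c, IsLinearMap ℂ fun a => tA a b c)
    (htA2 : ∀ a c, IsLinearMap ℂ fun b => tA a b c)
    (htA3 : ∀ a b, IsLinearMap ℂ fun c => tA a b c)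
    -- the ternary Banach A-module products on X
    (mXAA : X → A → A → X) (mAXA : A → X → A → X) (mAAX : A → A → X → X)
    (hm1 : ∀ a b, IsLinearMap ℂ fun x : X => mXAA x a b)
    (hm2 : ∀ (x : X) b, IsLinearMap ℂ fun a => mXAA x a b)
    (hm3 : ∀ (x : X) a, IsLinearMap ℂ fun b => mXAA x a b)
    (hm7 : ∀ b (x : X), IsLinearMap ℂ fun a => mAAX a b x)
    (hm8 : ∀ a (x : X), IsLinearMap ℂ fun b => mAAX a b x)
    (hm9 : ∀ a b, IsLinearMap ℂ fun x : X => mAAX a b x)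
    -- the norm estimate for the module products
    (hmnorm : ∀ (x : X) a b,
      max (max ‖mXAA x a b‖ ‖mAXA a x b‖) ‖mAAX a b x‖ ≤ ‖a‖ * ‖b‖ * ‖x‖)
    -- the data of the theorem
    (f : A → X) (g h k : A → A)
    (hf0 : f 0 = 0)
    (φ : A → A → A → ℝ)
    (hφsum : ∀ x y u : A, Summable fun n : ℕ =>
      φ ((2 ^ n : ℝ) • x) ((2 ^ n : ℝ) • y) ((2 ^ n : ℝ) • u))
    (hfineq : ∀ lam : ℂ, ‖lam‖ = 1 → ∀ x y u : A,
      ‖f (lam • x + lam • y + tA u u u) - lam • f x - lam • f y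
          - twistedBracket mXAA mAAX g h k (f u) u u
          + twistedBracket mXAA mAAX g h k (f u) u u
          + twistedBracket mXAA mAAX g h k (f u) u u‖ ≤ φ x y u)
    (hgineq : ∀ lam : ℂ, ‖lam‖ = 1 → ∀ x y : A,
      ‖g (lam • x + lam • y) - lam • g x - lam • g y‖ ≤ φ x y 0)
    (hhineq : ∀ lam : ℂ, ‖lam‖ = 1 → ∀ x y : A,
      ‖h (lam • x + lam • y) - lam • h x - lam • h y‖ ≤ φ x y 0)
    (hkineq : ∀ lam : ℂ, ‖lam‖ = 1 → ∀ x y : A,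
      ‖k (lam • x + lam • y) - lam • k x - lam • k y‖ ≤ φ x y 0) :
    ∃ σ τ ξ : A →ₗ[ℂ] A, ∃ D : A →ₗ[ℂ] X,
      (∀ x : A, ‖g x - σ x‖ ≤
        (1 / 2) * ∑' n : ℕ, φ ((2 ^ n : ℝ) • x) ((2 ^ n : ℝ) • x) 0) ∧
      (∀ x : A, ‖h x - τ x‖ ≤
        (1 / 2) * ∑' n : ℕ, φ ((2 ^ n : ℝ) • x) ((2 ^ n : ℝ) • x) 0) ∧
      (∀ x : A, ‖k x - ξ x‖ ≤
        (1 / 2) * ∑' n : ℕ, φ ((2 ^ n : ℝ) • x) ((2 ^ n : ℝ) • x) 0) ∧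
      (∀ x : A, ‖f x - D x‖ ≤
        (1 / 2) * ∑' n : ℕ, φ ((2 ^ n : ℝ) • x) ((2 ^ n : ℝ) • x) 0) ∧
      -- D is a Jordan Lie ternary (σ,τ,ξ)-derivation
      (∀ u : A, D (tA u u u) =
          twistedBracket mXAA mAAX (⇑σ) (⇑τ) (⇑ξ) (D u) u u
          - twistedBracket mXAA mAAX (⇑σ) (⇑τ) (⇑ξ) (D u) u u
          - twistedBracket mXAA mAAX (⇑σ) (⇑τ) (⇑ξ) (D u) u u) ∧
      -- uniqueness
      (∀ σ' : A →ₗ[ℂ] A, (∀ x : A, ‖g x - σ' x‖ ≤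
        (1 / 2) * ∑' n : ℕ, φ ((2 ^ n : ℝ) • x) ((2 ^ n : ℝ) • x) 0) → σ' = σ) ∧
      (∀ τ' : A →ₗ[ℂ] A, (∀ x : A, ‖h x - τ' x‖ ≤
        (1 / 2) * ∑' n : ℕ, φ ((2 ^ n : ℝ) • x) ((2 ^ n : ℝ) • x) 0) → τ' = τ) ∧
      (∀ ξ' : A →ₗ[ℂ] A, (∀ x : A, ‖k x - ξ' x‖ ≤
        (1 / 2) * ∑' n : ℕ, φ ((2 ^ n : ℝ) • x) ((2 ^ n : ℝ) • x) 0) → ξ' = ξ) ∧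
      (∀ D' : A →ₗ[ℂ] X, (∀ x : A, ‖f x - D' x‖ ≤
        (1 / 2) * ∑' n : ℕ, φ ((2 ^ n : ℝ) • x) ((2 ^ n : ℝ) • x) 0) → D' = D) := by
  have hψ : ∀ x y : A, Summable fun n : ℕ => φ ((2 ^ n : ℝ) • x) ((2 ^ n : ℝ) • y) 0 :=
    fun x y => by simpa using hφsum x y 0
  have hf_approx : ∀ lam : ℂ, ‖lam‖ = 1 → ∀ x y : A,
      ‖f (lam • x + lam • y) - lam • f x - lam • f y‖ ≤ φ x y 0 := fun lam hlam x y => by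
    simpa [twistedBracket, hf0, (hm1 _ _).map_zero, (hm9 _ _).map_zero, (htA1 _ _).map_zero]
      using hfineq lam hlam x y 0
  obtain ⟨σ, hσ, hσ_near, hσ_unique⟩ :=
    exists_linearMap_norm_sub_le_of_norm_smul_add_smul_sub_le hgineq hψ
  obtain ⟨τ, hτ, hτ_near, hτ_unique⟩ :=
    exists_linearMap_norm_sub_le_of_norm_smul_add_smul_sub_le hhineq hψ
  obtain ⟨ξ, hξ, hξ_near, hξ_unique⟩ :=
    exists_linearMap_norm_sub_le_of_norm_smul_add_smul_sub_le hkineq hψ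
  obtain ⟨D, hD, hD_near, hD_unique⟩ :=
    exists_linearMap_norm_sub_le_of_norm_smul_add_smul_sub_le hf_approx hψ
  refine ⟨σ, τ, ξ, D, hσ_near, hτ_near, hξ_near, hD_near, fun u => ?_,
    hσ_unique, hτ_unique, hξ_unique, hD_unique⟩
  have hdefect : Tendsto (fun n : ℕ => jordanDefect tA mXAA mAAX f g h k ((2 ^ n : ℝ) • u))
      atTop (𝓝 0) := by
    refine squeeze_zero_norm (fun n => ?_) (by simpa using (hφsum 0 0 u).tendsto_atTop_zero)
    -- at `x = y = 0` the three brackets of `hfineq` collapse to a single `+ twistedBracket`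
    simpa [jordanDefect, hf0] using hfineq 1 norm_one 0 0 ((2 ^ n : ℝ) • u)
  have hmXAA : ∀ x a b, ‖mXAA x a b‖ ≤ 1 * ‖x‖ * ‖a‖ * ‖b‖ := fun x a b =>
    (le_of_max_le_left (le_of_max_le_left (hmnorm x a b))).trans_eq (by ring)
  have hmAAX : ∀ a b x, ‖mAAX a b x‖ ≤ 1 * ‖a‖ * ‖b‖ * ‖x‖ := fun a b x =>
    (le_of_max_le_right (hmnorm x a b)).trans_eq (by ring)
  have hD_jordan := jordanDefect_eq_zero_of_tendsto ⟨htA1, htA2, htA3⟩ ⟨hm1, hm2, hm3⟩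
    ⟨hm7, hm8, hm9⟩ hmXAA hmAAX hD (hσ u) (hτ u) (hξ u) hdefect
  rw [sub_self, zero_sub]
  exact eq_neg_of_add_eq_zero_left hD_jordan

/-- Theorem 2.3: generalized Hyers–Ulam–Rassias stability of Jordan Lie ternary
`(σ,τ,ξ)`-derivations on Banach ternary algebras. -/
theorem stability_jordan_lie_ternary_derivation
    {A X : Type*}
    [NormedAddCommGroup A] [NormedSpace ℂ A] [CompleteSpace A]
    [NormedAddCommGroup X] [NormedSpace ℂ X] [CompleteSpace X]
    -- the ternary product of the Banach ternary algebra A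
    (tA : A → A → A → A)
    (htA1 : ∀ b c, IsLinearMap ℂ fun a => tA a b c)
    (htA2 : ∀ a c, IsLinearMap ℂ fun b => tA a b c)
    (htA3 : ∀ a b, IsLinearMap ℂ fun c => tA a b c)
    (htAassoc : ∀ a b c d e, tA (tA a b c) d e = tA a (tA b c d) e)
    (htAnorm : ∀ a b c, ‖tA a b c‖ ≤ ‖a‖ * ‖b‖ * ‖c‖)
    -- the ternary Banach A-module products on X
    (mXAA : X → A → A → X) (mAXA : A → X → A → X) (mAAX : A → A → X → X)
    (hm1 : ∀ a b, IsLinearMap ℂ fun x : X => mXAA x a b)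
    (hm2 : ∀ (x : X) b, IsLinearMap ℂ fun a => mXAA x a b)
    (hm3 : ∀ (x : X) a, IsLinearMap ℂ fun b => mXAA x a b)
    (hm4 : ∀ (x : X) b, IsLinearMap ℂ fun a => mAXA a x b)
    (hm5 : ∀ a b, IsLinearMap ℂ fun x : X => mAXA a x b)
    (hm6 : ∀ a (x : X), IsLinearMap ℂ fun b => mAXA a x b)
    (hm7 : ∀ b (x : X), IsLinearMap ℂ fun a => mAAX a b x)
    (hm8 : ∀ a (x : X), IsLinearMap ℂ fun b => mAAX a b x)
    (hm9 : ∀ a b, IsLinearMap ℂ fun x : X => mAAX a b x)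
    -- the mixed associativity identities
    (hx1 : ∀ a b c d (x : X), mAAX (tA a b c) d x = mAAX a (tA b c d) x)
    (hx1' : ∀ a b c d (x : X), mAAX a (tA b c d) x = mAAX a b (mAAX c d x))
    (hx2 : ∀ a b c d (x : X), mAXA (tA a b c) x d = mAXA a (mAAX b c x) d)
    (hx2' : ∀ a b c d (x : X), mAXA a (mAAX b c x) d = mAAX a b (mAXA c x d))
    (hx3 : ∀ a b c d (x : X), mXAA (mXAA x a b) c d = mXAA x (tA a b c) d)
    (hx3' : ∀ a b c d (x : X), mXAA x (tA a b c) d = mXAA x a (tA b c d))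
    (hx4 : ∀ a b c d (x : X), mXAA (mAXA a x b) c d = mAXA a (mXAA x b c) d)
    (hx4' : ∀ a b c d (x : X), mAXA a (mXAA x b c) d = mAXA a x (tA b c d))
    (hx5 : ∀ a b c d (x : X), mXAA (mAAX a b x) c d = mAXA a (mAXA b x c) d)
    (hx5' : ∀ a b c d (x : X), mAXA a (mAXA b x c) d = mAAX a b (mXAA x c d))
    -- the norm estimate for the module products
    (hmnorm : ∀ (x : X) a b,
      max (max ‖mXAA x a b‖ ‖mAXA a x b‖) ‖mAAX a b x‖ ≤ ‖a‖ * ‖b‖ * ‖x‖)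
    -- the data of the theorem
    (f : A → X) (g h k : A → A)
    (hf0 : f 0 = 0) (hg0 : g 0 = 0) (hh0 : h 0 = 0) (hk0 : k 0 = 0)
    (φ : A → A → A → ℝ)
    (hφnonneg : ∀ x y u, 0 ≤ φ x y u)
    (hφsum : ∀ x y u : A, Summable fun n : ℕ =>
      φ ((2 ^ n : ℝ) • x) ((2 ^ n : ℝ) • y) ((2 ^ n : ℝ) • u))
    (hfineq : ∀ lam : ℂ, ‖lam‖ = 1 → ∀ x y u : A,
      ‖f (lam • x + lam • y + tA u u u) - lam • f x - lam • f y
          - twistedBracket mXAA mAAX g h k (f u) u u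
          + twistedBracket mXAA mAAX g h k (f u) u u
          + twistedBracket mXAA mAAX g h k (f u) u u‖ ≤ φ x y u)
    (hgineq : ∀ lam : ℂ, ‖lam‖ = 1 → ∀ x y : A,
      ‖g (lam • x + lam • y) - lam • g x - lam • g y‖ ≤ φ x y 0)
    (hhineq : ∀ lam : ℂ, ‖lam‖ = 1 → ∀ x y : A,
      ‖h (lam • x + lam • y) - lam • h x - lam • h y‖ ≤ φ x y 0)
    (hkineq : ∀ lam : ℂ, ‖lam‖ = 1 → ∀ x y : A,
      ‖k (lam • x + lam • y) - lam • k x - lam • k y‖ ≤ φ x y 0) :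
    ∃ σ τ ξ : A →ₗ[ℂ] A, ∃ D : A →ₗ[ℂ] X,
      (∀ x : A, ‖g x - σ x‖ ≤
        (1 / 2) * ∑' n : ℕ, φ ((2 ^ n : ℝ) • x) ((2 ^ n : ℝ) • x) 0) ∧
      (∀ x : A, ‖h x - τ x‖ ≤
        (1 / 2) * ∑' n : ℕ, φ ((2 ^ n : ℝ) • x) ((2 ^ n : ℝ) • x) 0) ∧
      (∀ x : A, ‖k x - ξ x‖ ≤
        (1 / 2) * ∑' n : ℕ, φ ((2 ^ n : ℝ) • x) ((2 ^ n : ℝ) • x) 0) ∧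
      (∀ x : A, ‖f x - D x‖ ≤
        (1 / 2) * ∑' n : ℕ, φ ((2 ^ n : ℝ) • x) ((2 ^ n : ℝ) • x) 0) ∧
      -- D is a Jordan Lie ternary (σ,τ,ξ)-derivation
      (∀ u : A, D (tA u u u) =
          twistedBracket mXAA mAAX (⇑σ) (⇑τ) (⇑ξ) (D u) u u
          - twistedBracket mXAA mAAX (⇑σ) (⇑τ) (⇑ξ) (D u) u u
          - twistedBracket mXAA mAAX (⇑σ) (⇑τ) (⇑ξ) (D u) u u) ∧
      -- uniqueness
      (∀ σ' : A →ₗ[ℂ] A, (∀ x : A, ‖g x - σ' x‖ ≤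
        (1 / 2) * ∑' n : ℕ, φ ((2 ^ n : ℝ) • x) ((2 ^ n : ℝ) • x) 0) → σ' = σ) ∧
      (∀ τ' : A →ₗ[ℂ] A, (∀ x : A, ‖h x - τ' x‖ ≤
        (1 / 2) * ∑' n : ℕ, φ ((2 ^ n : ℝ) • x) ((2 ^ n : ℝ) • x) 0) → τ' = τ) ∧
      (∀ ξ' : A →ₗ[ℂ] A, (∀ x : A, ‖k x - ξ' x‖ ≤
        (1 / 2) * ∑' n : ℕ, φ ((2 ^ n : ℝ) • x) ((2 ^ n : ℝ) • x) 0) → ξ' = ξ) ∧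
      (∀ D' : A →ₗ[ℂ] X, (∀ x : A, ‖f x - D' x‖ ≤
        (1 / 2) * ∑' n : ℕ, φ ((2 ^ n : ℝ) • x) ((2 ^ n : ℝ) • x) 0) → D' = D) :=
  stability_jordan_lie_ternary_derivation_general tA htA1 htA2 htA3 mXAA mAXA mAAX hm1 hm2 hm3 hm7
    hm8 hm9 hmnorm f g h k hf0 φ hφsum hfineq hgineq hhineq hkineq
end
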